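/- arXiv:2405.04214 — 2 statements merged into one kernel-verified Lean document; each statement's English description precedes it below -/
import Mathlib

section
/- With A, B the linearized Saint-Venant matrices (g*h0 > 0), C = ε·I₃, D = [[ε,0,0],[0,ε,0],[Δ,Δ,ε]], γ ∈ [-1,1], and k ∈ ℝ, every eigenvalue ω of Ω(k,γ) = -ik(γA + sqrt(1-γ²)B) - k²(γ²C + (1-γ²)D) satisfies the characteristic equation ε³k⁶ - Δk³(1-γ²)^{3/2}(g h0 k γ + iω) + εk²(g h0 k² - iΔk³(1-γ²)^{3/2} + 3ω²) + 3ε²k⁴ω + (g h0 k² + ω²)ω = 0. -/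
/-- With `A`, `B` the linearized Saint-Venant matrices (`g*h0 > 0`), `C = ε·I₃`,
`D = [[ε,0,0],[0,ε,0],[Δ,Δ,ε]]`, `γ ∈ [-1,1]`, `k ∈ ℝ`, every eigenvalue `ω` of
`Ω(k,γ) = -ik(γA + √(1-γ²)B) - k²(γ²C + (1-γ²)D)` satisfies the characteristic equation
`ε³k⁶ - Δk³(1-γ²)^{3/2}(g h0 k γ + iω) + εk²(g h0 k² - iΔk³(1-γ²)^{3/2} + 3ω²)
  + 3ε²k⁴ω + (g h0 k² + ω²)ω = 0`. -/
theorem stmt_7 (g h0 ε Δ γ : ℝ) (hgh : 0 < g * h0) (hε : 0 < ε)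
    (hγ : γ ∈ Set.Icc (-1 : ℝ) 1)
    (A B C D : Matrix (Fin 3) (Fin 3) ℂ)
    (hA : A = Matrix.of ![![0, 1, 0], ![(g * h0 : ℂ), 0, 0], ![0, 0, 0]])
    (hB : B = Matrix.of ![![0, 0, 1], ![0, 0, 0], ![(g * h0 : ℂ), 0, 0]])
    (hC : C = (ε : ℂ) • (1 : Matrix (Fin 3) (Fin 3) ℂ))
    (hD : D = Matrix.of ![![(ε : ℂ), 0, 0], ![0, (ε : ℂ), 0], ![(Δ : ℂ), (Δ : ℂ), (ε : ℂ)]])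
    (k : ℝ) :
    ∀ ω ∈ spectrum ℂ
        ((-(Complex.I * k)) • ((γ : ℂ) • A + (Real.sqrt (1 - γ ^ 2) : ℂ) • B) -
          (k ^ 2 : ℂ) • ((γ ^ 2 : ℂ) • C + ((1 - γ ^ 2 : ℝ) : ℂ) • D)),
      (ε ^ 3 * k ^ 6 : ℂ) -
          (Δ * k ^ 3 : ℂ) * ((Real.sqrt ((1 - γ ^ 2) ^ 3) : ℂ)) *
            ((g * h0 * k * γ : ℝ) + Complex.I * ω) +
          (ε * k ^ 2 : ℂ) *
            ((g * h0 * k ^ 2 : ℝ) -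
              Complex.I * (Δ * k ^ 3 : ℂ) * ((Real.sqrt ((1 - γ ^ 2) ^ 3) : ℂ)) +
              3 * ω ^ 2) +
          (3 * ε ^ 2 * k ^ 4 : ℂ) * ω + ((g * h0 * k ^ 2 : ℝ) + ω ^ 2) * ω = 0 := by
  intro ω hω
  have hx : (0:ℝ) ≤ 1 - γ^2 := by nlinarith [hγ.1, hγ.2]
  set s : ℝ := Real.sqrt (1 - γ^2) with hs
  have hs2r : s^2 = 1 - γ^2 := Real.sq_sqrt hx
  have hs2 : ((s:ℂ))^2 = ((1 - γ^2 : ℝ) : ℂ) := by exact_mod_cast congrArg Complex.ofReal hs2r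
  have hs3r : Real.sqrt ((1 - γ^2)^3) = s * (1 - γ^2) := by
    rw [show (1 - γ^2)^3 = (s * (1 - γ^2))^2 by rw [mul_pow, hs2r]; ring]
    exact Real.sqrt_sq (by positivity)
  rw [spectrum.mem_iff] at hω
  set M := ((-(Complex.I * k)) • ((γ : ℂ) • A + ((s : ℝ) : ℂ) • B) -
          (k ^ 2 : ℂ) • ((γ ^ 2 : ℂ) • C + ((1 - γ ^ 2 : ℝ) : ℂ) • D)) with hM
  have hdet : Matrix.det ((ω • 1 : Matrix (Fin 3) (Fin 3) ℂ) - M) = 0 := by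
    by_contra h
    apply hω
    rw [Algebra.algebraMap_eq_smul_one]
    exact (Matrix.isUnit_iff_isUnit_det _).mpr (Ne.isUnit h)
  subst hA hB hC hD
  rw [hM] at hdet
  simp [Matrix.det_fin_three, Matrix.smul_apply, Matrix.one_apply, Matrix.sub_apply,
    Matrix.add_apply, Matrix.of_apply, Matrix.vecHead, Matrix.vecTail] at hdet
  rw [hs3r]
  push_cast at hs2 hdet ⊢
  ring_nf at hdet
  simp only [Complex.I_sq] at hdet
  ring_nf at hdet
  linear_combination hdet + ((-(Δ*(k:ℂ)^3)*((g*h0)*k*γ + Complex.I*ω + Complex.I*ε*k^2))*(s:ℂ) - (g*h0)*k^2*(ω + ε*k^2)) * hs2 + ((Δ:ℂ)*k^3*s*(Complex.I*ε*k^2 + Complex.I*ω + γ*(g*h0)*k)) * hs2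
end

section
/- Take h0 = 1, g = 10, Δ = 5, γ = 1/2, ε = 1. Then there exists a real wavenumber k (for instance some k with 1 ≤ k ≤ 2) such that the stability operator Ω(k) = -ik(γA + sqrt(1-γ²)B) - k²(γ²C + (1-γ²)D) has an eigenvalue ω ∈ ℂ with Re(ω) > 0; i.e., the viscous regularization is linearly unstable for oblique waves even though C and D have positive eigenvalues. -/
set_option maxHeartbeats 2000000

/-- Take `h0 = 1`, `g = 10`, `Δ = 5`, `γ = 1/2`, `ε = 1`. Then there exists a real
wavenumber `k` with `1 ≤ k ≤ 2` such that the stability operator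
`Ω(k) = -ik(γA + √(1-γ²)B) - k²(γ²C + (1-γ²)D)` has an eigenvalue `ω ∈ ℂ` with
`Re ω > 0`: the viscous regularization is linearly unstable for oblique waves even
though `C` and `D` have positive eigenvalues. -/
theorem stmt_8
    (A B C D : Matrix (Fin 3) (Fin 3) ℂ)
    (hA : A = Matrix.of ![![0, 1, 0], ![10, 0, 0], ![0, 0, 0]])
    (hB : B = Matrix.of ![![0, 0, 1], ![0, 0, 0], ![10, 0, 0]])
    (hC : C = (1 : Matrix (Fin 3) (Fin 3) ℂ))
    (hD : D = Matrix.of ![![1, 0, 0], ![0, 1, 0], ![5, 5, 1]]) :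
    ∃ k : ℝ, k ∈ Set.Icc (1 : ℝ) 2 ∧
      ∃ ω ∈ spectrum ℂ
          ((-(Complex.I * k)) • (((1 : ℝ) / 2 : ℂ) • A + ((Real.sqrt 3 / 2 : ℝ) : ℂ) • B) -
            (k ^ 2 : ℂ) • ((((1 : ℝ) / 2 : ℂ) ^ 2) • C + (((3 : ℝ) / 4 : ℝ) : ℂ) • D)),
        0 < ω.re := by
  set sD := Real.sqrt 94 with hsDdef
  set s3 := Real.sqrt 3 with hs3def
  have hsD2 : sD ^ 2 = 94 := Real.sq_sqrt (by norm_num)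
  have hsD0 : (0:ℝ) ≤ sD := Real.sqrt_nonneg _
  have hsDl : (9.69:ℝ) < sD := by nlinarith
  have hsDu : sD < 9.7 := by nlinarith
  have hs32 : s3 ^ 2 = 3 := Real.sq_sqrt (by norm_num)
  have hs30 : (0:ℝ) ≤ s3 := Real.sqrt_nonneg _
  have hs3l : (1.732:ℝ) < s3 := by nlinarith
  have hs3u : s3 < 1.7321 := by nlinarith
  set P := Real.sqrt ((2*sD-5)/4) with hPdef
  have hP2 : P ^ 2 = (2*sD-5)/4 := Real.sq_sqrt (by nlinarith)
  have hP0 : (0:ℝ) ≤ P := Real.sqrt_nonneg _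
  have hPl : (1.896:ℝ) < P := by nlinarith
  have hPu : P < 1.898 := by nlinarith
  set k := (2*sD+8)/(5*s3*P) with hkdef
  have hs3pos : (0:ℝ) < s3 := by nlinarith
  have hPpos : (0:ℝ) < P := by nlinarith
  have hk1 : 5*s3*P*k = 2*sD+8 := by
    rw [hkdef]; field_simp
  have hdenl : (16.4:ℝ) < 5*s3*P := by nlinarith [mul_pos (sub_pos.2 hs3l) (sub_pos.2 hPl)]
  have hdenu : 5*s3*P < 16.44 := by nlinarith [mul_pos (sub_pos.2 hs3u) (sub_pos.2 hPu)]
  have hkl : (1:ℝ) ≤ k := by nlinarith [hk1, hdenu, hsDl]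
  have hku : k ≤ 2 := by nlinarith [hk1, hdenl, hsDu]
  have hkpos : (0:ℝ) < k := by linarith
  have hPP : (31:ℝ) < 5*s3*(P^2) := by nlinarith [mul_pos (sub_pos.2 hs3l) (show (0:ℝ) < P^2 - 3.59 by nlinarith)]
  have hPk : k < P := by nlinarith [hk1, hPP, hsDu, hdenl]
  have hP4 : P ^ 4 = (401 - 20*sD)/16 := by
    have h : P ^ 4 = (P ^ 2) ^ 2 := by ring
    rw [h, hP2]; linear_combination (1/4)*hsD2
  have hkey : 135*(s3*k)*P = (16*P^3+148*P)*P := by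
    linear_combination 27*hk1 - 16*hP4 - 148*hP2
  have hER : P^3 + (37/4)*P = (135/16)*(s3*k) := by
    have h2 := mul_right_cancel₀ (ne_of_gt hPpos) hkey
    linear_combination (-1/16) * h2
  have hEI : (3/2)*P^2 + 39/8 = (15/8)*(s3*k*P) := by
    linear_combination (-3/8)*hk1 + (3/2)*hP2
  have hdet : (Matrix.of ![![↑(k*P) + ↑(k/2) * Complex.I, ↑(k/2) * Complex.I, ↑(s3*k/2) * Complex.I],
          ![↑(5*k) * Complex.I, ↑(k*P) + ↑(k/2) * Complex.I, 0],
          ![↑(15/4*(k*k)) + ↑(5*s3*k) * Complex.I, ↑(15/4*(k*k)),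
            ↑(k*P) + ↑(k/2) * Complex.I]] : Matrix (Fin 3) (Fin 3) ℂ).det = 0 := by
    rw [Matrix.det_fin_three]
    simp only [Matrix.of_apply, Matrix.cons_val', Matrix.cons_val_zero, Matrix.cons_val_one,
      Matrix.head_cons, Matrix.empty_val', Matrix.cons_val_fin_one, Matrix.head_fin_const,
      Matrix.cons_val_two, Matrix.tail_cons]
    rw [Complex.ext_iff]
    constructor
    · simp [Complex.add_re, Complex.add_im, Complex.mul_re, Complex.mul_im]
      linear_combination (k^3) * hER + (5/2)*k^3*P*hs32
    · simp [Complex.add_re, Complex.add_im, Complex.mul_re, Complex.mul_im]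
      linear_combination (k^3) * hEI + (5/4)*k^3*hs32
  refine ⟨k, ⟨hkl, hku⟩, (↑(k*P - k^2) + ↑(k/2) * Complex.I : ℂ), ?_, ?_⟩
  · rw [spectrum.mem_iff]
    intro hu
    rw [Matrix.isUnit_iff_isUnit_det] at hu
    have hU : ((algebraMap ℂ (Matrix (Fin 3) (Fin 3) ℂ)) (↑(k*P - k^2) + ↑(k/2) * Complex.I) -
        ((-(Complex.I * k)) • (((1 : ℝ) / 2 : ℂ) • A + ((Real.sqrt 3 / 2 : ℝ) : ℂ) • B) -
          (k ^ 2 : ℂ) • ((((1 : ℝ) / 2 : ℂ) ^ 2) • C + (((3 : ℝ) / 4 : ℝ) : ℂ) • D))) =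
        Matrix.of ![![↑(k*P) + ↑(k/2) * Complex.I, ↑(k/2) * Complex.I, ↑(s3*k/2) * Complex.I],
          ![↑(5*k) * Complex.I, ↑(k*P) + ↑(k/2) * Complex.I, 0],
          ![↑(15/4*(k*k)) + ↑(5*s3*k) * Complex.I, ↑(15/4*(k*k)),
            ↑(k*P) + ↑(k/2) * Complex.I]] := by
      rw [Algebra.algebraMap_eq_smul_one]
      ext i j
      fin_cases i <;> fin_cases j <;>
        simp [hA, hB, hC, hD, hs3def, Matrix.one_apply, Matrix.vecHead, Matrix.vecTail] <;>
        push_cast <;> ring_nf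
    rw [hU, hdet] at hu
    simp at hu
  · simp only [Complex.add_re, Complex.ofReal_re, Complex.mul_re, Complex.I_re,
      Complex.I_im, Complex.ofReal_im, Complex.mul_im]
    norm_num
    nlinarith [mul_pos hkpos (sub_pos.2 hPk)]
end
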